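/- Let n, m ≥ 2 and let G = P_n ⊠ P_m be the strong product of the path on n vertices with the path on m vertices. Then mr_+^R(G) = mr_+^C(G) = (n−1)(m−1). Consequently, G is a frame graph in a real (or complex) inner product space of dimension d if and only if (n−1)(m−1) ≤ d ≤ nm. -/

import Mathlib

open scoped ComplexOrder

/-- The minimum positive semidefinite rank of a simple graph `G` over the field `𝕜`
(`𝕜 = ℝ` gives `mr₊^ℝ`, `𝕜 = ℂ` gives `mr₊^ℂ`): the minimum rank over all positive
semidefinite Hermitian matrices whose off-diagonal zero/nonzero pattern matches `G`. -/
noncomputable def mrPlus (𝕜 : Type) [RCLike 𝕜] {V : Type} [Fintype V] [DecidableEq V]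
    (G : SimpleGraph V) : ℕ :=
  sInf {r : ℕ | ∃ A : Matrix V V 𝕜, A.PosSemidef ∧
    (∀ i j : V, i ≠ j → (A i j ≠ 0 ↔ G.Adj i j)) ∧ A.rank = r}

/-- `G` is a frame graph in the `d`-dimensional inner product space over `𝕜`:
there is a spanning family (frame) `f` indexed by the vertices such that distinct
vertices are adjacent iff the corresponding vectors are non-orthogonal. -/
def IsFrameGraphIn (𝕜 : Type) [RCLike 𝕜] {V : Type} (G : SimpleGraph V) (d : ℕ) : Prop :=
  ∃ f : V → EuclideanSpace 𝕜 (Fin d),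
    Submodule.span 𝕜 (Set.range f) = ⊤ ∧
    ∀ i j : V, i ≠ j → ((inner 𝕜 (f i) (f j) : 𝕜) ≠ 0 ↔ G.Adj i j)

/-- The strong product of two simple graphs. -/
def strongProd {α β : Type} (G : SimpleGraph α) (H : SimpleGraph β) :
    SimpleGraph (α × β) where
  Adj x y := (x.1 = y.1 ∧ H.Adj x.2 y.2) ∨ (x.2 = y.2 ∧ G.Adj x.1 y.1) ∨
    (G.Adj x.1 y.1 ∧ H.Adj x.2 y.2)
  symm := by
    constructor
    rintro ⟨a, b⟩ ⟨c, d⟩ (⟨h1, h2⟩ | ⟨h1, h2⟩ | ⟨h1, h2⟩)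
    · exact Or.inl ⟨h1.symm, h2.symm⟩
    · exact Or.inr (Or.inl ⟨h1.symm, h2.symm⟩)
    · exact Or.inr (Or.inr ⟨h1.symm, h2.symm⟩)
  loopless := by
    constructor
    rintro ⟨a, b⟩ (⟨_, h⟩ | ⟨_, h⟩ | ⟨h, _⟩)
    · exact H.loopless.irrefl b h
    · exact G.loopless.irrefl a h
    · exact G.loopless.irrefl a h

/-- The join `G ∨ H` of two graphs with disjoint vertex sets. -/
def joinGraph {α β : Type} (G : SimpleGraph α) (H : SimpleGraph β) :
    SimpleGraph (α ⊕ β) where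
  Adj x y := match x, y with
    | Sum.inl a, Sum.inl b => G.Adj a b
    | Sum.inr a, Sum.inr b => H.Adj a b
    | Sum.inl _, Sum.inr _ => True
    | Sum.inr _, Sum.inl _ => True
  symm := by
    constructor
    rintro (a | a) (b | b) h
    · exact h.symm
    · trivial
    · trivial
    · exact h.symm
  loopless := by
    constructor
    rintro (a | a) h
    · exact G.loopless.irrefl a h
    · exact H.loopless.irrefl a h

/-- The vertex-sum `G · H` of `G` and `H`, obtained by identifying the vertex `a` of `G`
with the vertex `b` of `H` (and no other vertices or edges shared). -/
def vertexSum {α β : Type} (G : SimpleGraph α) (H : SimpleGraph β) (a : α) (b : β) :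
    SimpleGraph (α ⊕ {y : β // y ≠ b}) where
  Adj x y := match x, y with
    | Sum.inl u, Sum.inl u' => G.Adj u u'
    | Sum.inr v, Sum.inr v' => H.Adj v.1 v'.1
    | Sum.inl u, Sum.inr v => u = a ∧ H.Adj b v.1
    | Sum.inr v, Sum.inl u => u = a ∧ H.Adj b v.1
  symm := by
    constructor
    rintro (u | v) (u' | v') h
    · exact h.symm
    · exact h
    · exact h
    · exact h.symm
  loopless := by
    constructor
    rintro (u | v) h
    · exact G.loopless.irrefl u h
    · exact H.loopless.irrefl v.1 h

/-- The corona product `G ∘ H`: one copy of `G`, one copy of `H` for each vertex of `G`,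
with every vertex of the `i`-th copy of `H` joined to the `i`-th vertex of `G`. -/
def corona {α β : Type} (G : SimpleGraph α) (H : SimpleGraph β) :
    SimpleGraph (α ⊕ α × β) where
  Adj x y := match x, y with
    | Sum.inl u, Sum.inl u' => G.Adj u u'
    | Sum.inr p, Sum.inr q => p.1 = q.1 ∧ H.Adj p.2 q.2
    | Sum.inl u, Sum.inr p => u = p.1
    | Sum.inr p, Sum.inl u => u = p.1
  symm := by
    constructor
    rintro (u | p) (u' | q) h
    · exact h.symm
    · exact h
    · exact h
    · exact ⟨h.1.symm, h.2.symm⟩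
  loopless := by
    constructor
    rintro (u | p) h
    · exact G.loopless.irrefl u h
    · exact H.loopless.irrefl p.2 h.2

/-- `v : Fin m → V` is an OS-vertex set of `G`: the vertices are distinct, and for each `k`
there is `w` adjacent to `v k`, different from all `v l` with `l ≤ k`, and non-adjacent to
every `v l` (`l < k`) lying in the connected component of `v k` in the subgraph induced by
`{v 0, …, v k}`. -/
def IsOSSet {V : Type} (G : SimpleGraph V) {m : ℕ} (v : Fin m → V) : Prop :=
  Function.Injective v ∧
  ∀ k : Fin m, ∃ w : V,
    G.Adj (v k) w ∧
    (∀ l : Fin m, l ≤ k → w ≠ v l) ∧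
    ∀ l : Fin m, (hl : l < k) →
      (G.induce {x : V | ∃ l' : Fin m, l' ≤ k ∧ x = v l'}).Reachable
        ⟨v l, ⟨l, le_of_lt hl, rfl⟩⟩ ⟨v k, ⟨k, le_refl k, rfl⟩⟩ →
      ¬ G.Adj w (v l)

/-- The OS-number of `G`: the maximum cardinality of an OS-vertex set of `G`. -/
noncomputable def OSNumber {V : Type} (G : SimpleGraph V) : ℕ :=
  sSup {m : ℕ | ∃ v : Fin m → V, IsOSSet G v}


/-!
Tensoring the representation `i ↦ e_{i-1} + e_i` of `P_{k+1}` in `𝕜^k` with itself gives a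
faithful orthogonal representation of `P_n ⊠ P_m` in dimension `(n-1)(m-1)`. Conversely, in any
faithful orthogonal representation `f` the vectors `f (i, j)` with `i < n - 1`, `j < m - 1` are
linearly independent, since `f (i+1, j+1)` is orthogonal to `f (k, l)` unless `(i, j) ≤ (k, l)`,
but not to `f (i, j)`. Positive semidefinite matrices with a given pattern are exactly the Gram
matrices of faithful representations, with rank the dimension of the span, so
`mr₊ = (n-1)(m-1)` over `ℝ` and `ℂ`. Frames then exist in every dimension up to the number `nm`
of vectors, because a dependent frame can be lifted by one dimension.
-/

open Module Submodule Set Finset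
open scoped TensorProduct

section InnerProductSpace

variable {𝕜 : Type*} [RCLike 𝕜] {E : Type*} [NormedAddCommGroup E] [InnerProductSpace 𝕜 E]

theorem linearIndependent_of_inner_triangular {ι : Type*} [PartialOrder ι] [Fintype ι]
    {v w : ι → E} (hdiag : ∀ i, inner 𝕜 (w i) (v i) ≠ 0)
    (hzero : ∀ i j, ¬ i ≤ j → inner 𝕜 (w i) (v j) = 0) : LinearIndependent 𝕜 v := by
  classical
  rw [Fintype.linearIndependent_iff]
  by_contra! ⟨c, hc, hne⟩
  obtain ⟨i, hi⟩ := Finset.exists_maximal (s := {j | c j ≠ 0})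
    (by simpa [Finset.Nonempty] using hne)
  have hsum : ∑ j, c j * inner 𝕜 (w i) (v j) = c i * inner 𝕜 (w i) (v i) := by
    refine Finset.sum_eq_single i (fun j _ hji => ?_) (by simp)
    by_cases hcj : c j = 0
    · rw [hcj, zero_mul]
    · rw [hzero i j fun hij => hji (le_antisymm (hi.2 (by simpa using hcj) hij) hij), mul_zero]
  have : inner 𝕜 (w i) (∑ j, c j • v j) = 0 := by rw [hc, inner_zero_right]
  simp only [inner_sum, inner_smul_right, hsum] at this
  exact mul_ne_zero (by simpa using hi.1) (hdiag i) this

theorem Matrix.rank_gram {n : Type*} [Fintype n] [FiniteDimensional 𝕜 E] (v : n → E) :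
    (Matrix.gram 𝕜 v).rank = finrank 𝕜 (span 𝕜 (range v)) := by
  let b := stdOrthonormalBasis 𝕜 E
  let e : E ≃ₗ[𝕜] (Fin (finrank 𝕜 E) → 𝕜) :=
    b.repr.toLinearEquiv.trans (WithLp.linearEquiv 2 𝕜 _)
  rw [Matrix.gram_eq_conjTranspose_mul b, Matrix.rank_conjTranspose_mul_self,
    Matrix.rank_eq_finrank_span_cols, ← e.finrank_map_eq, map_span, ← range_comp]
  rfl

open scoped MatrixOrder in
theorem Matrix.PosSemidef.exists_eq_gram {n : Type*} [Fintype n]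
    {A : Matrix n n 𝕜} (hA : A.PosSemidef) :
    ∃ v : n → EuclideanSpace 𝕜 n, A = Matrix.gram 𝕜 v := by
  classical
  obtain ⟨B, rfl⟩ := CStarAlgebra.nonneg_iff_eq_star_mul_self.mp hA.nonneg
  refine ⟨fun i => WithLp.toLp 2 (B.col i), ?_⟩
  ext i j
  simp [Matrix.mul_apply, PiLp.inner_apply, mul_comm]

theorem span_range_toLp_prod_eq_top {V : Type*} [DecidableEq V] {f : V → E}
    (hspan : span 𝕜 (range f) = ⊤) {v₀ : V} (hv₀ : f v₀ ∈ span 𝕜 (f '' {v₀}ᶜ)) :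
    span 𝕜 (range fun u => WithLp.toLp 2 (f u, if u = v₀ then (1 : 𝕜) else 0)) = ⊤ := by
  set S := span 𝕜 (range fun u => WithLp.toLp 2 (f u, if u = v₀ then (1 : 𝕜) else 0))
  let L : E →ₗ[𝕜] WithLp 2 (E × 𝕜) :=
    (WithLp.linearEquiv 2 𝕜 (E × 𝕜)).symm.toLinearMap ∘ₗ LinearMap.inl 𝕜 E 𝕜
  have hL : ∀ x, L x = WithLp.toLp 2 (x, 0) := fun x => rfl
  have hLf : ∀ u ≠ v₀, L (f u) ∈ S := fun u hu => subset_span ⟨u, by simp [hL, hu]⟩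
  have hLf₀ : L (f v₀) ∈ S := by
    have := apply_mem_span_image_of_mem_span L hv₀
    rw [← image_comp] at this
    exact span_le.2 (by rintro _ ⟨u, hu, rfl⟩; exact hLf u hu) this
  have hlast : WithLp.toLp 2 ((0 : E), (1 : 𝕜)) ∈ S := by
    have hFv₀ : WithLp.toLp 2 (f v₀, (1 : 𝕜)) ∈ S := subset_span ⟨v₀, by simp⟩
    have := sub_mem hFv₀ hLf₀
    simpa only [hL, if_pos, ← WithLp.toLp_sub, Prod.mk_sub_mk, sub_self, sub_zero] using this
  have hLS : ∀ x, L x ∈ S := by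
    intro x
    refine span_le.2 ?_ (apply_mem_span_image_of_mem_span L (hspan ▸ mem_top : x ∈ _))
    rintro _ ⟨_, ⟨u, rfl⟩, rfl⟩
    obtain rfl | hu := eq_or_ne u v₀
    exacts [hLf₀, hLf u hu]
  refine eq_top_iff.2 fun x _ => ?_
  have : x = L x.fst + x.snd • WithLp.toLp 2 ((0 : E), (1 : 𝕜)) := by
    simp [hL, ← WithLp.toLp_smul, ← WithLp.toLp_add]
    rfl
  rw [this]
  exact add_mem (hLS _) (smul_mem _ _ hlast)

end InnerProductSpace

theorem strongProd_adj {α β : Type} {G : SimpleGraph α} {H : SimpleGraph β} {p q : α × β} :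
    (strongProd G H).Adj p q ↔
      p ≠ q ∧ (p.1 = q.1 ∨ G.Adj p.1 q.1) ∧ (p.2 = q.2 ∨ H.Adj p.2 q.2) := by
  obtain ⟨a, b⟩ := p
  obtain ⟨c, d⟩ := q
  change (_ ∨ _ ∨ _) ↔ _
  constructor
  · rintro (⟨rfl, h⟩ | ⟨rfl, h⟩ | ⟨h, h'⟩)
    · exact ⟨by simp [h.ne], by simp, .inr h⟩
    · exact ⟨by simp [h.ne], .inr h, by simp⟩
    · exact ⟨by simp [h.ne], .inr h, .inr h'⟩
  · rintro ⟨hne, rfl | h, rfl | h'⟩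
    · exact absurd rfl hne
    · exact .inl ⟨rfl, h'⟩
    · exact .inr (.inl ⟨rfl, h⟩)
    · exact .inr (.inr ⟨h, h'⟩)

namespace SimpleGraph

variable {𝕜 : Type*} [RCLike 𝕜] {V α β : Type}
  {E F : Type*} [NormedAddCommGroup E] [InnerProductSpace 𝕜 E]
  [NormedAddCommGroup F] [InnerProductSpace 𝕜 F]

variable (𝕜) in
def IsFaithfulOrthRep (G : SimpleGraph V) (f : V → E) : Prop :=
  ∀ i j, i ≠ j → (inner 𝕜 (f i) (f j) ≠ 0 ↔ G.Adj i j)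

theorem IsFaithfulOrthRep.inner_ne_zero_iff {G : SimpleGraph V} {f : V → E}
    (hf : G.IsFaithfulOrthRep 𝕜 f) (hf₀ : ∀ i, f i ≠ 0) {i j : V} :
    inner 𝕜 (f i) (f j) ≠ 0 ↔ i = j ∨ G.Adj i j := by
  obtain rfl | hij := eq_or_ne i j
  · simpa using hf₀ i
  · simp [hf i j hij, hij]

theorem IsFaithfulOrthRep.tmul {G : SimpleGraph α} {H : SimpleGraph β}
    {f : α → E} {g : β → F}
    (hf : G.IsFaithfulOrthRep 𝕜 f) (hf₀ : ∀ i, f i ≠ 0)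
    (hg : H.IsFaithfulOrthRep 𝕜 g) (hg₀ : ∀ i, g i ≠ 0) :
    (strongProd G H).IsFaithfulOrthRep 𝕜 (fun p => f p.1 ⊗ₜ[𝕜] g p.2) := by
  intro p q hpq
  rw [TensorProduct.inner_tmul, mul_ne_zero_iff, hf.inner_ne_zero_iff hf₀,
    hg.inner_ne_zero_iff hg₀, strongProd_adj]
  exact (and_iff_right hpq).symm

variable (𝕜) in
noncomputable def pathRep (a : ℕ) (i : Fin (a + 1)) : EuclideanSpace 𝕜 (Fin a) :=
  WithLp.toLp 2 fun k => if i = k.castSucc ∨ i = k.succ then 1 else 0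

theorem inner_pathRep {a : ℕ} (i j : Fin (a + 1)) :
    inner 𝕜 (pathRep 𝕜 a i) (pathRep 𝕜 a j) = (#{k : Fin a |
      (i = k.castSucc ∨ i = k.succ) ∧ (j = k.castSucc ∨ j = k.succ)} : 𝕜) := by
  simp only [pathRep, PiLp.inner_apply, RCLike.inner_apply, Finset.card_filter, Nat.cast_sum]
  refine Finset.sum_congr rfl fun k _ => ?_
  split_ifs <;> simp_all

theorem inner_pathRep_ne_zero_iff {a : ℕ} (ha : 0 < a) {i j : Fin (a + 1)} :
    inner 𝕜 (pathRep 𝕜 a i) (pathRep 𝕜 a j) ≠ 0 ↔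
      i = j ∨ (pathGraph (a + 1)).Adj i j := by
  rw [inner_pathRep, Nat.cast_ne_zero, ← Nat.pos_iff_ne_zero, Finset.card_pos]
  simp only [Finset.Nonempty, Finset.mem_filter, Finset.mem_univ, true_and, pathGraph_adj,
    Fin.ext_iff, Fin.val_castSucc, Fin.val_succ]
  constructor
  · rintro ⟨k, hk⟩
    omega
  · intro h
    by_cases hk : min i.val j.val < a
    · exact ⟨⟨_, hk⟩, by simp; omega⟩
    · exact ⟨⟨i - 1, by omega⟩, by simp; omega⟩

theorem pathRep_ne_zero {a : ℕ} (ha : 0 < a) (i : Fin (a + 1)) : pathRep 𝕜 a i ≠ 0 := by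
  simpa using (inner_pathRep_ne_zero_iff (𝕜 := 𝕜) ha (i := i) (j := i)).2 (.inl rfl)

theorem isFaithfulOrthRep_pathRep {a : ℕ} (ha : 0 < a) :
    (pathGraph (a + 1)).IsFaithfulOrthRep 𝕜 (pathRep 𝕜 a) := fun i j hij => by
  rw [inner_pathRep_ne_zero_iff ha, or_iff_right hij]

theorem IsFaithfulOrthRep.linearIndependent_strongProd_pathGraph {a b : ℕ}
    {f : Fin (a + 1) × Fin (b + 1) → E}
    (hf : (strongProd (pathGraph (a + 1)) (pathGraph (b + 1))).IsFaithfulOrthRep 𝕜 f) :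
    LinearIndependent 𝕜 fun x : Fin a × Fin b => f (x.1.castSucc, x.2.castSucc) := by
  refine linearIndependent_of_inner_triangular (w := fun x => f (x.1.succ, x.2.succ))
    (fun x => ?_) (fun x y hxy => ?_)
  · refine (hf _ _ ?_).2 (strongProd_adj.2 ?_)
    · simp [Fin.ext_iff]
    · simp [Fin.ext_iff, pathGraph_adj]
  · simp only [Prod.le_def, Fin.le_def] at hxy
    by_contra h
    have hadj := strongProd_adj.1 ((hf _ _ ?_).1 h)
    · simp only [Fin.ext_iff, pathGraph_adj, Fin.val_succ, Fin.val_castSucc] at hadj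
      omega
    · simp only [ne_eq, Prod.mk.injEq, Fin.ext_iff, Fin.val_succ, Fin.val_castSucc]
      omega

theorem IsFaithfulOrthRep.le_finrank_span_strongProd_pathGraph {a b : ℕ}
    {f : Fin (a + 1) × Fin (b + 1) → E}
    (hf : (strongProd (pathGraph (a + 1)) (pathGraph (b + 1))).IsFaithfulOrthRep 𝕜 f) :
    a * b ≤ finrank 𝕜 (span 𝕜 (range f)) := by
  have := Module.Finite.span_of_finite 𝕜 (finite_range f)
  let g : Fin a × Fin b → E := fun x => f (x.1.castSucc, x.2.castSucc)
  calc a * b = finrank 𝕜 (span 𝕜 (range g)) := by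
        rw [finrank_span_eq_card hf.linearIndependent_strongProd_pathGraph]; simp
    _ ≤ _ := Submodule.finrank_mono (span_mono (range_comp_subset_range _ f))

end SimpleGraph

section MinimumRank

variable {𝕜 : Type} [RCLike 𝕜] {V : Type} {G : SimpleGraph V}
  {E : Type*} [NormedAddCommGroup E] [InnerProductSpace 𝕜 E]

theorem mrPlus_le_finrank_span [Fintype V] [DecidableEq V] [FiniteDimensional 𝕜 E] {f : V → E}
    (hf : G.IsFaithfulOrthRep 𝕜 f) : mrPlus 𝕜 G ≤ finrank 𝕜 (span 𝕜 (range f)) :=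
  Nat.sInf_le ⟨Matrix.gram 𝕜 f, Matrix.posSemidef_gram 𝕜 f, hf, Matrix.rank_gram f⟩

theorem exists_isFaithfulOrthRep_finrank_span_eq_mrPlus [Fintype V] [DecidableEq V]
    [FiniteDimensional 𝕜 E] {f : V → E} (hf : G.IsFaithfulOrthRep 𝕜 f) :
    ∃ v : V → EuclideanSpace 𝕜 V, G.IsFaithfulOrthRep 𝕜 v ∧
      finrank 𝕜 (span 𝕜 (range v)) = mrPlus 𝕜 G := by
  have hne : Set.Nonempty {r : ℕ | ∃ A : Matrix V V 𝕜, A.PosSemidef ∧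
      (∀ i j, i ≠ j → (A i j ≠ 0 ↔ G.Adj i j)) ∧ A.rank = r} :=
    ⟨_, Matrix.gram 𝕜 f, Matrix.posSemidef_gram 𝕜 f, hf, Matrix.rank_gram f⟩
  obtain ⟨A, hA, hpat, hrank⟩ := Nat.sInf_mem hne
  obtain ⟨v, rfl⟩ := hA.exists_eq_gram
  exact ⟨v, hpat, (Matrix.rank_gram v).symm.trans hrank⟩

theorem isFrameGraphIn_finrank [FiniteDimensional 𝕜 E] {f : V → E}
    (hspan : span 𝕜 (range f) = ⊤) (hf : G.IsFaithfulOrthRep 𝕜 f) :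
    IsFrameGraphIn 𝕜 G (finrank 𝕜 E) := by
  let e := (stdOrthonormalBasis 𝕜 E).repr
  refine ⟨e ∘ f, ?_, fun i j hij => by simpa using hf i j hij⟩
  rw [range_comp, ← LinearIsometryEquiv.coe_toLinearEquiv, ← LinearEquiv.coe_toLinearMap,
    span_image, hspan, Submodule.map_top, LinearEquiv.range]

theorem IsFrameGraphIn.le_card [Fintype V] {d : ℕ} (h : IsFrameGraphIn 𝕜 G d) :
    d ≤ Fintype.card V := by
  obtain ⟨f, hspan, -⟩ := h
  have := finrank_range_le_card (R := 𝕜) f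
  rwa [Set.finrank, hspan, finrank_top, finrank_euclideanSpace_fin] at this

/-- A frame with more vectors than dimensions has a redundant vector `f v₀`; giving it a fresh
orthogonal coordinate raises the dimension by one and keeps all other inner products. -/
theorem IsFrameGraphIn.succ [Fintype V] {d : ℕ} (h : IsFrameGraphIn 𝕜 G d)
    (hd : d < Fintype.card V) : IsFrameGraphIn 𝕜 G (d + 1) := by
  classical
  obtain ⟨f, hspan, hf⟩ := h
  have hdep : ¬ LinearIndependent 𝕜 f := fun hli => by
    have := hli.fintype_card_le_finrank
    rw [finrank_euclideanSpace_fin] at this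
    omega
  obtain ⟨v₀, hv₀⟩ : ∃ v₀, f v₀ ∈ span 𝕜 (f '' {v₀}ᶜ) := by
    simpa [linearIndependent_iff_notMem_span, compl_eq_univ_sdiff] using hdep
  have hF : G.IsFaithfulOrthRep 𝕜
      fun u => WithLp.toLp 2 (f u, if u = v₀ then (1 : 𝕜) else 0) := by
    intro i j hij
    have : inner 𝕜 (if i = v₀ then (1 : 𝕜) else 0) (if j = v₀ then 1 else 0) = 0 := by
      split_ifs with hi hj <;> simp_all
    rw [WithLp.prod_inner_apply, WithLp.ofLp_toLp, WithLp.ofLp_toLp, this, add_zero]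
    exact hf i j hij
  have := isFrameGraphIn_finrank (span_range_toLp_prod_eq_top hspan hv₀) hF
  rwa [(WithLp.linearEquiv 2 𝕜 _).finrank_eq, finrank_prod, finrank_euclideanSpace_fin,
    finrank_self] at this

theorem IsFrameGraphIn.of_le [Fintype V] {d e : ℕ} (h : IsFrameGraphIn 𝕜 G d)
    (hde : d ≤ e) (he : e ≤ Fintype.card V) : IsFrameGraphIn 𝕜 G e := by
  induction e, hde using Nat.le_induction with
  | base => exact h
  | succ e _ ih => exact (ih (by omega)).succ (by omega)

open SimpleGraph

variable {a b : ℕ}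

variable (𝕜) in
noncomputable def gridRep (a b : ℕ) (p : Fin (a + 1) × Fin (b + 1)) :
    EuclideanSpace 𝕜 (Fin a) ⊗[𝕜] EuclideanSpace 𝕜 (Fin b) :=
  pathRep 𝕜 a p.1 ⊗ₜ pathRep 𝕜 b p.2

theorem isFaithfulOrthRep_gridRep (ha : 0 < a) (hb : 0 < b) :
    (strongProd (pathGraph (a + 1)) (pathGraph (b + 1))).IsFaithfulOrthRep 𝕜
      (gridRep 𝕜 a b) :=
  (isFaithfulOrthRep_pathRep ha).tmul (pathRep_ne_zero ha) (isFaithfulOrthRep_pathRep hb)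
    (pathRep_ne_zero hb)

variable (𝕜 a b) in
theorem finrank_euclideanSpace_fin_tensorProduct :
    finrank 𝕜 (EuclideanSpace 𝕜 (Fin a) ⊗[𝕜] EuclideanSpace 𝕜 (Fin b)) = a * b := by
  rw [finrank_tensorProduct, finrank_euclideanSpace_fin, finrank_euclideanSpace_fin]

theorem span_range_gridRep_eq_top (ha : 0 < a) (hb : 0 < b) :
    span 𝕜 (range (gridRep 𝕜 a b)) = ⊤ :=
  eq_top_of_finrank_eq <| le_antisymm (finrank_le _) <|
    (finrank_euclideanSpace_fin_tensorProduct 𝕜 a b).trans_le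
      (isFaithfulOrthRep_gridRep ha hb).le_finrank_span_strongProd_pathGraph

theorem mrPlus_strongProd_pathGraph_succ (ha : 0 < a) (hb : 0 < b) :
    mrPlus 𝕜 (strongProd (pathGraph (a + 1)) (pathGraph (b + 1))) = a * b := by
  have hrep := isFaithfulOrthRep_gridRep (𝕜 := 𝕜) ha hb
  refine le_antisymm ?_ ?_
  · calc mrPlus 𝕜 _ ≤ _ := mrPlus_le_finrank_span hrep
      _ = a * b := by
        rw [span_range_gridRep_eq_top ha hb, finrank_top, finrank_euclideanSpace_fin_tensorProduct]
  · obtain ⟨v, hv, hvr⟩ := exists_isFaithfulOrthRep_finrank_span_eq_mrPlus hrep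
    exact hvr ▸ hv.le_finrank_span_strongProd_pathGraph

theorem isFrameGraphIn_strongProd_pathGraph_succ_iff (ha : 0 < a) (hb : 0 < b) {d : ℕ} :
    IsFrameGraphIn 𝕜 (strongProd (pathGraph (a + 1)) (pathGraph (b + 1))) d ↔
      a * b ≤ d ∧ d ≤ (a + 1) * (b + 1) := by
  constructor
  · intro h
    obtain ⟨f, hspan, hf⟩ := id h
    refine ⟨?_, by simpa using h.le_card⟩
    have := IsFaithfulOrthRep.le_finrank_span_strongProd_pathGraph hf
    rwa [hspan, finrank_top, finrank_euclideanSpace_fin] at this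
  · rintro ⟨hd₁, hd₂⟩
    have base := isFrameGraphIn_finrank (𝕜 := 𝕜) (span_range_gridRep_eq_top ha hb)
      (isFaithfulOrthRep_gridRep ha hb)
    rw [finrank_euclideanSpace_fin_tensorProduct] at base
    exact base.of_le hd₁ (by simpa using hd₂)

end MinimumRank

/-- for `n, m ≥ 2`, `mr₊(P_n ⊠ P_m) = (n−1)(m−1)`, and `P_n ⊠ P_m` is a frame
graph in a real (or complex) space of dimension `d` iff `(n−1)(m−1) ≤ d ≤ nm`. -/
theorem mrPlus_strongProd_path_path (n m : ℕ) (hn : 2 ≤ n) (hm : 2 ≤ m) :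
    mrPlus ℝ (strongProd (SimpleGraph.pathGraph n) (SimpleGraph.pathGraph m)) =
      (n - 1) * (m - 1) ∧
    mrPlus ℂ (strongProd (SimpleGraph.pathGraph n) (SimpleGraph.pathGraph m)) =
      (n - 1) * (m - 1) ∧
    ∀ d : ℕ,
      (IsFrameGraphIn ℝ (strongProd (SimpleGraph.pathGraph n) (SimpleGraph.pathGraph m)) d ↔
        (n - 1) * (m - 1) ≤ d ∧ d ≤ n * m) ∧
      (IsFrameGraphIn ℂ (strongProd (SimpleGraph.pathGraph n) (SimpleGraph.pathGraph m)) d ↔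
        (n - 1) * (m - 1) ≤ d ∧ d ≤ n * m) := by
  obtain ⟨a, rfl⟩ : ∃ a, n = a + 1 := ⟨n - 1, by omega⟩
  obtain ⟨b, rfl⟩ : ∃ b, m = b + 1 := ⟨m - 1, by omega⟩
  have ha : 0 < a := by omega
  have hb : 0 < b := by omega
  simp only [Nat.add_sub_cancel]
  exact ⟨mrPlus_strongProd_pathGraph_succ ha hb, mrPlus_strongProd_pathGraph_succ ha hb,
    fun d => ⟨isFrameGraphIn_strongProd_pathGraph_succ_iff ha hb,
      isFrameGraphIn_strongProd_pathGraph_succ_iff ha hb⟩⟩
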